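/- (Theorem 9, exact recovery in the parametric noiseless case.) Suppose σ = 0 and r_i = 0 for all i (so y_i = x_i'β₀ exactly). Suppose κ̃ > 0 and λ > 0 obeys λ√s < nκ̃. Then any square-root lasso minimizer β̂ satisfies ‖β̂ − β₀‖_{2,n} = 0. Moreover, if κ₁ > 0 and all γ_j > 0, then β̂ = β₀. -/

import Mathlib

open Finset MeasureTheory ProbabilityTheory

namespace SqrtLasso

/-- Empirical average `E_n[h_i] = n⁻¹ ∑ᵢ h i`. -/
noncomputable def En (n : ℕ) (h : Fin n → ℝ) : ℝ := (∑ i, h i) / n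

/-- Euclidean inner product `a'b = ∑ⱼ aⱼ bⱼ`. -/
noncomputable def dot {p : ℕ} (a b : Fin p → ℝ) : ℝ := ∑ j, a j * b j

/-- Prediction norm `‖δ‖_{2,n} = (E_n[(x_i'δ)²])^{1/2}`. -/
noncomputable def predNorm (n : ℕ) {p : ℕ} (x : Fin n → Fin p → ℝ) (δ : Fin p → ℝ) : ℝ :=
  Real.sqrt (En n fun i => (dot (x i) δ) ^ 2)

/-- `ℓ₁` norm of a vector. -/
noncomputable def l1 {p : ℕ} (v : Fin p → ℝ) : ℝ := ∑ j, |v j|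

/-- Restriction `v_S`: equal to `v` on `S` and `0` outside. -/
def restr {p : ℕ} (S : Finset (Fin p)) (v : Fin p → ℝ) : Fin p → ℝ :=
  fun j => if j ∈ S then v j else 0

/-- `Γ v`, i.e. componentwise rescaling by loadings `γ`. -/
noncomputable def scl {p : ℕ} (γ v : Fin p → ℝ) : Fin p → ℝ := fun j => γ j * v j

/-- The support of a vector. -/
noncomputable def supp {p : ℕ} (β : Fin p → ℝ) : Finset (Fin p) := Finset.univ.filter fun j => β j ≠ 0

/-- The least-squares criterion `Q̂(β) = E_n[(y_i - x_i'β)²]`. -/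
noncomputable def Qhat (n : ℕ) {p : ℕ} (x : Fin n → Fin p → ℝ) (y : Fin n → ℝ)
    (β : Fin p → ℝ) : ℝ := En n fun i => (y i - dot (x i) β) ^ 2

/-- The restricted set `Δ_c̄`. -/
def Delta {p : ℕ} (γ : Fin p → ℝ) (T : Finset (Fin p)) (cb : ℝ) : Set (Fin p → ℝ) :=
  {δ | δ ≠ 0 ∧ l1 (scl γ (restr Tᶜ δ)) ≤ cb * l1 (scl γ (restr T δ))}

/-- The restricted eigenvalue `κ_c̄`. -/
noncomputable def kappa (n : ℕ) {p : ℕ} (x : Fin n → Fin p → ℝ) (γ : Fin p → ℝ)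
    (T : Finset (Fin p)) (cb : ℝ) : ℝ :=
  sInf {r | ∃ δ ∈ Delta γ T cb,
    r = Real.sqrt T.card * predNorm n x δ / l1 (scl γ (restr T δ))}

/-- The quantity `κ̃`. -/
noncomputable def kappaTilde (n : ℕ) {p : ℕ} (x : Fin n → Fin p → ℝ) (γ : Fin p → ℝ)
    (T : Finset (Fin p)) : ℝ :=
  sInf {r | ∃ δ : Fin p → ℝ, l1 (scl γ (restr Tᶜ δ)) < l1 (scl γ (restr T δ)) ∧
    r = Real.sqrt T.card * predNorm n x δ /
      (l1 (scl γ (restr T δ)) - l1 (scl γ (restr Tᶜ δ)))}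

/-- The score `S̃ = E_n[x_i(σε_i + r_i)] / √(E_n[(σε_i + r_i)²])`. -/
noncomputable def score (n : ℕ) {p : ℕ} (x : Fin n → Fin p → ℝ) (ε rr : Fin n → ℝ)
    (σ : ℝ) : Fin p → ℝ :=
  fun j => En n (fun i => x i j * (σ * ε i + rr i)) /
    Real.sqrt (En n fun i => (σ * ε i + rr i) ^ 2)

/-- `‖Γ⁻¹ S̃‖_∞ = max_j |S̃_j| / γ_j`. -/
noncomputable def scoreSup (n : ℕ) {p : ℕ} (x : Fin n → Fin p → ℝ) (ε rr : Fin n → ℝ)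
    (σ : ℝ) (γ : Fin p → ℝ) : ℝ :=
  ⨆ j, |score n x ε rr σ j| / γ j

/-- The quantity `ϱ_c̄`. -/
noncomputable def varrho (n : ℕ) {p : ℕ} (x : Fin n → Fin p → ℝ) (γ : Fin p → ℝ)
    (T : Finset (Fin p)) (β₀ : Fin p → ℝ) (S : Fin p → ℝ) (cb : ℝ) : ℝ :=
  sSup {r | ∃ δ ∈ Delta γ T cb, 0 < predNorm n x δ ∧
    l1 (scl γ (δ + β₀)) ≤ cb * l1 (scl γ β₀) ∧ r = |dot S δ| / predNorm n x δ}

/-- Quadratic form `δ'Mδ`. -/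
noncomputable def quadForm {p : ℕ} (M : Fin p → Fin p → ℝ) (δ : Fin p → ℝ) : ℝ :=
  ∑ j, ∑ k, δ j * M j k * δ k

/-- Maximal `m`-sparse eigenvalue `φ_max(m, M)`. -/
noncomputable def phiMax {p : ℕ} (M : Fin p → Fin p → ℝ) (T : Finset (Fin p)) (m : ℕ) : ℝ :=
  sSup {r | ∃ δ : Fin p → ℝ, δ ≠ 0 ∧ (supp δ \ T).card ≤ m ∧
    r = quadForm M δ / ∑ j, (δ j) ^ 2}

/-- Minimal `m`-sparse eigenvalue `φ_min(m, M)`. -/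
noncomputable def phiMin {p : ℕ} (M : Fin p → Fin p → ℝ) (T : Finset (Fin p)) (m : ℕ) : ℝ :=
  sInf {r | ∃ δ : Fin p → ℝ, δ ≠ 0 ∧ (supp δ \ T).card ≤ m ∧
    r = quadForm M δ / ∑ j, (δ j) ^ 2}

/-- Gram matrix `E_n[x_i x_i']`. -/
noncomputable def gram (n : ℕ) {p : ℕ} (x : Fin n → Fin p → ℝ) : Fin p → Fin p → ℝ :=
  fun j k => En n fun i => x i j * x i k

/-- Rescaled Gram matrix `Γ⁻¹ E_n[x_i x_i'] Γ⁻¹`. -/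
noncomputable def rgram (n : ℕ) {p : ℕ} (x : Fin n → Fin p → ℝ) (γ : Fin p → ℝ) :
    Fin p → Fin p → ℝ :=
  fun j k => gram n x j k / (γ j * γ k)

/-! The minimality of `βh` tested against `β₀` gives, in the noiseless model,
`‖δ‖_{2,n} ≤ (λ/n)(‖Γβ₀‖₁ - ‖Γβh‖₁) ≤ (λ/n)(‖Γδ_T‖₁ - ‖Γδ_{Tᶜ}‖₁)` for `δ = βh - β₀`.
If `‖δ‖_{2,n} > 0`, the gap on the right is positive, so the definition of `κ̃` bounds it by
`√s ‖δ‖_{2,n} / κ̃`, which yields `n κ̃ ≤ λ √s`, contradicting the choice of `λ`. Once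
`‖δ‖_{2,n} = 0`, the same inequality gives `‖Γβh‖₁ ≤ ‖Γβ₀‖₁`, which puts `δ` in the cone `Δ₁`;
there `κ₁ > 0` forces `δ = 0`. -/

section

variable {n p : ℕ} (x : Fin n → Fin p → ℝ) (γ : Fin p → ℝ) (T : Finset (Fin p))

lemma l1_nonneg (v : Fin p → ℝ) : 0 ≤ l1 v :=
  Finset.sum_nonneg fun _ _ => abs_nonneg _

lemma predNorm_nonneg (δ : Fin p → ℝ) : 0 ≤ predNorm n x δ :=
  Real.sqrt_nonneg _

lemma dot_sub (a b c : Fin p → ℝ) : dot a (b - c) = dot a b - dot a c := by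
  simp only [dot, Pi.sub_apply, mul_sub, Finset.sum_sub_distrib]

lemma predNorm_zero : predNorm n x 0 = 0 := by
  simp [predNorm, dot, En]

lemma sqrt_Qhat_eq_predNorm_sub {β₀ : Fin p → ℝ} {y : Fin n → ℝ}
    (hy : ∀ i, y i = dot (x i) β₀) (β : Fin p → ℝ) :
    Real.sqrt (Qhat n x y β) = predNorm n x (β - β₀) := by
  simp only [Qhat, predNorm, hy, dot_sub]
  congr 2
  funext i
  ring

lemma l1_scl_sub_le_cone_gap {β₀ : Fin p → ℝ} (hβ₀ : ∀ j ∉ T, β₀ j = 0) (β : Fin p → ℝ) :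
    l1 (scl γ β₀) - l1 (scl γ β) ≤
      l1 (scl γ (restr T (β - β₀))) - l1 (scl γ (restr Tᶜ (β - β₀))) := by
  rw [le_sub_iff_add_le]
  simp only [l1, ← Finset.sum_sub_distrib, ← Finset.sum_add_distrib]
  refine Finset.sum_le_sum fun j _ => ?_
  by_cases hj : j ∈ T
  · simp only [scl, restr, hj, Finset.mem_compl, not_true_eq_false, if_true, if_false,
      mul_zero, abs_zero, add_zero, Pi.sub_apply, mul_sub]
    rw [abs_sub_comm (γ j * β j)]
    exact abs_sub_abs_le_abs_sub _ _
  · simp [scl, restr, hj, hβ₀ j hj]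

lemma kappaTilde_mul_le {δ : Fin p → ℝ}
    (hδ : l1 (scl γ (restr Tᶜ δ)) < l1 (scl γ (restr T δ))) :
    kappaTilde n x γ T * (l1 (scl γ (restr T δ)) - l1 (scl γ (restr Tᶜ δ))) ≤
      Real.sqrt T.card * predNorm n x δ := by
  have hbdd : BddBelow {r | ∃ δ : Fin p → ℝ, l1 (scl γ (restr Tᶜ δ)) < l1 (scl γ (restr T δ)) ∧
      r = Real.sqrt T.card * predNorm n x δ /
        (l1 (scl γ (restr T δ)) - l1 (scl γ (restr Tᶜ δ)))} := by
    refine ⟨0, ?_⟩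
    rintro r ⟨δ, hδ, rfl⟩
    exact div_nonneg (mul_nonneg (Real.sqrt_nonneg _) (predNorm_nonneg x _))
      (sub_nonneg.mpr hδ.le)
  exact (le_div_iff₀ (sub_pos.mpr hδ)).mp (csInf_le hbdd ⟨δ, hδ, rfl⟩)

lemma kappa_le {cb : ℝ} {δ : Fin p → ℝ} (hδ : δ ∈ Delta γ T cb) :
    kappa n x γ T cb ≤ Real.sqrt T.card * predNorm n x δ / l1 (scl γ (restr T δ)) := by
  refine csInf_le ⟨0, ?_⟩ ⟨δ, hδ, rfl⟩
  rintro r ⟨δ, -, rfl⟩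
  exact div_nonneg (mul_nonneg (Real.sqrt_nonneg _) (predNorm_nonneg x _)) (l1_nonneg _)

lemma predNorm_eq_zero_of_le_cone_gap {lam : ℝ} {δ : Fin p → ℝ} (hn : 0 < (n : ℝ))
    (hlam : 0 ≤ lam) (hgrow : lam * Real.sqrt T.card < n * kappaTilde n x γ T)
    (hδ : predNorm n x δ ≤
      lam / n * (l1 (scl γ (restr T δ)) - l1 (scl γ (restr Tᶜ δ)))) :
    predNorm n x δ = 0 := by
  set gap := l1 (scl γ (restr T δ)) - l1 (scl γ (restr Tᶜ δ))
  set P := predNorm n x δ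
  by_contra hP
  have hPpos : 0 < P := lt_of_le_of_ne (predNorm_nonneg x δ) (Ne.symm hP)
  have hnP : n * P ≤ lam * gap := by
    have := mul_le_mul_of_nonneg_left hδ hn.le
    rwa [← mul_assoc, mul_div_cancel₀ _ hn.ne'] at this
  have hgap : 0 < gap := by
    by_contra! h
    nlinarith
  have hκ : 0 < kappaTilde n x γ T := by
    have : 0 ≤ lam * Real.sqrt T.card := by positivity
    nlinarith
  have hκgap := kappaTilde_mul_le x γ T (sub_pos.mp hgap)
  -- `n κ̃ P ≤ κ̃ λ gap ≤ λ √s P`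
  nlinarith [mul_le_mul_of_nonneg_left hnP hκ.le, mul_le_mul_of_nonneg_left hκgap hlam,
    mul_lt_mul_of_pos_right hgrow hPpos]

lemma eq_zero_of_predNorm_eq_zero {cb : ℝ} {δ : Fin p → ℝ} (hκ : 0 < kappa n x γ T cb)
    (hcone : l1 (scl γ (restr Tᶜ δ)) ≤ cb * l1 (scl γ (restr T δ)))
    (hδ : predNorm n x δ = 0) : δ = 0 := by
  by_contra hne
  have := kappa_le x γ T ⟨hne, hcone⟩
  rw [hδ, mul_zero, zero_div] at this
  linarith

end

theorem statement_12_general (n p : ℕ) (hn : 1 ≤ n)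
    (x : Fin n → Fin p → ℝ) (β₀ γ : Fin p → ℝ)
    (y : Fin n → ℝ) (hy : ∀ i, y i = dot (x i) β₀)
    (lam : ℝ) (hlam : 0 < lam)
    (hgrow : lam * Real.sqrt (supp β₀).card < n * kappaTilde n x γ (supp β₀))
    (βh : Fin p → ℝ)
    (hmin : ∀ β : Fin p → ℝ,
      Real.sqrt (Qhat n x y βh) + lam / n * l1 (scl γ βh) ≤
        Real.sqrt (Qhat n x y β) + lam / n * l1 (scl γ β)) :
    predNorm n x (βh - β₀) = 0 ∧
      (0 < kappa n x γ (supp β₀) 1 → (∀ j, 0 < γ j) → βh = β₀) := by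
  set T := supp β₀
  have hn' : (0 : ℝ) < n := by exact_mod_cast hn
  have hc : 0 < lam / n := div_pos hlam hn'
  have hbasic : predNorm n x (βh - β₀) + lam / n * l1 (scl γ βh) ≤ lam / n * l1 (scl γ β₀) := by
    simpa [sqrt_Qhat_eq_predNorm_sub x hy, predNorm_zero] using hmin β₀
  have hgap := l1_scl_sub_le_cone_gap γ T (fun j hj => by simpa [T, supp] using hj) βh
  have hzero : predNorm n x (βh - β₀) = 0 := by
    refine predNorm_eq_zero_of_le_cone_gap x γ T hn' hlam.le hgrow ?_
    nlinarith [mul_le_mul_of_nonneg_left hgap hc.le]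
  refine ⟨hzero, fun hκ _ => sub_eq_zero.mp (eq_zero_of_predNorm_eq_zero x γ T hκ ?_ hzero)⟩
  have : l1 (scl γ βh) ≤ l1 (scl γ β₀) := le_of_mul_le_mul_left (by linarith) hc
  linarith

/-- Theorem 9, exact recovery in the parametric noiseless case. -/
theorem statement_12 (n p : ℕ) (hn : 1 ≤ n) (hp : 1 ≤ p)
    (x : Fin n → Fin p → ℝ) (β₀ γ : Fin p → ℝ) (hγ : ∀ j, 1 ≤ γ j)
    (hs : 1 ≤ (supp β₀).card)
    (y : Fin n → ℝ) (hy : ∀ i, y i = dot (x i) β₀)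
    (lam : ℝ) (hlam : 0 < lam)
    (hκ : 0 < kappaTilde n x γ (supp β₀))
    (hgrow : lam * Real.sqrt (supp β₀).card < n * kappaTilde n x γ (supp β₀))
    (βh : Fin p → ℝ)
    (hmin : ∀ β : Fin p → ℝ,
      Real.sqrt (Qhat n x y βh) + lam / n * l1 (scl γ βh) ≤
        Real.sqrt (Qhat n x y β) + lam / n * l1 (scl γ β)) :
    predNorm n x (βh - β₀) = 0 ∧
      (0 < kappa n x γ (supp β₀) 1 → (∀ j, 0 < γ j) → βh = β₀) :=
  statement_12_general n p hn x β₀ γ y hy lam hlam hgrow βh hmin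

end SqrtLasso
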